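/- arXiv:2210.13102 — 6 statements merged into one kernel-verified Lean document; each statement's English description precedes it below -/
import Mathlib

section
/- For every integer n, every prime divisor p ≠ 5 of n^4+5n^3+15n^2+25n+25 satisfies p ≡ 1 (mod 5). -/
open Polynomial NumberField

/-- Every prime divisor `p ≠ 5` of `n^4+5n^3+15n^2+25n+25` satisfies `p ≡ 1 (mod 5)`. -/
theorem prime_dvd_lehmer_value_mod_five (n : ℤ) (p : ℕ) (hp : p.Prime) (hp5 : p ≠ 5)
    (hdvd : (p : ℤ) ∣ n^4 + 5*n^3 + 15*n^2 + 25*n + 25) : p % 5 = 1 := by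
  haveI := Fact.mk hp
  set N : ZMod p := (n : ZMod p) with hN
  have hf : N^4 + 5*N^3 + 15*N^2 + 25*N + 25 = 0 := by
    have h := (ZMod.intCast_zmod_eq_zero_iff_dvd _ p).mpr hdvd
    push_cast at h
    linear_combination h
  have h5ne : (5 : ZMod p) ≠ 0 := by
    intro h
    have : p ∣ 5 := by
      have := (ZMod.natCast_eq_zero_iff 5 p).mp (by exact_mod_cast h)
      exact this
    exact hp5 ((Nat.prime_dvd_prime_iff_eq hp (by norm_num)).mp this)
  have h3125 : (3125 : ZMod p) ≠ 0 := by
    have h : (3125 : ZMod p) = 5^5 := by norm_num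
    rw [h]
    exact pow_ne_zero _ h5ne
  set g : ZMod p := -(N^3 + 3*N^2 + 5*N + 5) with hg
  have hg5 : g^5 = 3125 := by
    linear_combination (-(N^11 + 10*N^10 + 50*N^9 + 170*N^8 + 430*N^7 + 843*N^6
      + 1310*N^5 + 1580*N^4 + 1500*N^3 + 1100*N^2 + 375*N + 250)) * hf
  have hgne : g ≠ 5 := by
    intro h
    apply h3125
    linear_combination (25*N^2 - 50*N - 125) * hf + (25*N^3 - 125*N - 625) * (by linear_combination h : g - 5 = 0)
  set x : ZMod p := g / 5 with hx
  have hx5 : x^5 = 1 := by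
    rw [hx, div_pow, hg5]
    norm_num
    exact h3125
  have hxne1 : x ≠ 1 := by
    intro h
    exact hgne ((div_eq_one_iff_eq h5ne).mp h)
  have hxne0 : x ≠ 0 := by
    intro h
    rw [h] at hx5
    simp at hx5
  haveI : Fact (Nat.Prime 5) := ⟨by norm_num⟩
  have hord : orderOf x = 5 := orderOf_eq_prime hx5 hxne1
  have hdvd' : orderOf x ∣ p - 1 :=
    orderOf_dvd_of_pow_eq_one (ZMod.pow_card_sub_one_eq_one hxne0)
  rw [hord] at hdvd'
  have h2 := hp.two_le
  omega
end

section
/- The only integral points on the curve Y^2 = X^4 + 5X^3 + 15X^2 + 25X + 25 are (x, y) = (0, 5) and (0, −5); that is, if x, y ∈ ℤ satisfy y^2 = x^4 + 5x^3 + 15x^2 + 25x + 25, then x = 0 and y = ±5. -/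
open Polynomial NumberField

/-- The only integral points on `Y² = X⁴ + 5X³ + 15X² + 25X + 25` are `(0, ±5)`. -/
theorem integral_points_lehmer_curve (x y : ℤ)
    (h : y ^ 2 = x ^ 4 + 5*x ^ 3 + 15*x ^ 2 + 25*x + 25) :
    x = 0 ∧ (y = 5 ∨ y = -5) := by
  -- (2x²+5x+8)² < (2y)² ≤ (2x²+5x+10)², with 2x²+5x+8 ≥ 0
  have h1 : (2*x^2+5*x+8)^2 < (2*y)^2 := by nlinarith [sq_nonneg x, sq_nonneg (x+3)]
  have h2 : (0:ℤ) ≤ 2*x^2+5*x+8 := by nlinarith [sq_nonneg (4*x+5)]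
  have h5 : (2*y)^2 ≤ (2*x^2+5*x+10)^2 := by nlinarith [sq_nonneg x]
  have h3 : 2*x^2+5*x+8 < |2*y| := by
    nlinarith [sq_abs (2*y), abs_nonneg (2*y)]
  have h6 : |2*y| ≤ 2*x^2+5*x+10 := by
    nlinarith [sq_abs (2*y), abs_nonneg (2*y)]
  have h7 : |2*y| = 2*x^2+5*x+9 ∨ |2*y| = 2*x^2+5*x+10 := by omega
  have hsq : (2*y)^2 = |2*y|^2 := (sq_abs _).symm
  rcases h7 with h7 | h7
  · -- then -x² + 10x + 19 = 0, impossible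
    rw [h7] at hsq
    exfalso
    have hx : x^2 - 10*x - 19 = 0 := by nlinarith
    have hx1 : -1 ≤ x := by nlinarith
    have hx2 : x ≤ 11 := by nlinarith
    have hx' : x*x - 10*x - 19 = 0 := by linear_combination hx
    interval_cases x <;> omega
  · rw [h7] at hsq
    have hx0 : x = 0 := by nlinarith [sq_nonneg x]
    subst hx0
    refine ⟨rfl, ?_⟩
    have : (y - 5) * (y + 5) = 0 := by linear_combination h
    rcases mul_eq_zero.mp this with h' | h'
    · left; linarith
    · right; linarith
end

section
/- For every nonzero integer n, the integer m_n = n^4+5n^3+15n^2+25n+25 is not a perfect square. -/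
open Polynomial NumberField

lemma nosq24 (c : ℤ) (h : ∀ z : ZMod 24, z^2 ≠ (c : ZMod 24)) (y : ℤ) (hy : y ^ 2 = c) :
    False := by
  have h2 := congrArg (fun t : ℤ => (t : ZMod 24)) hy
  push_cast at h2
  exact h _ h2

/-- For every nonzero integer `n`, the integer `m_n = n^4+5n^3+15n^2+25n+25` is not a
perfect square. -/
theorem lehmer_value_not_square (n : ℤ) (hn : n ≠ 0) :
    ¬ ∃ y : ℤ, y ^ 2 = n^4 + 5*n^3 + 15*n^2 + 25*n + 25 := by
  rintro ⟨y, hy⟩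
  by_cases h : -1 ≤ n ∧ n ≤ 11
  · obtain ⟨h1, h2⟩ := h
    interval_cases n <;>
      first
      | exact absurd rfl hn
      | (norm_num at hy; exact nosq24 _ (by decide) y hy)
  · have hbig : n ≤ -2 ∨ 12 ≤ n := by omega
    have hwsq : |2*y|^2 = 4*(n^4 + 5*n^3 + 15*n^2 + 25*n + 25) := by
      rw [sq_abs]; rw [show (2*y)^2 = 4*y^2 by ring, hy]
    set w := |2*y| with hw
    have hw0 : 0 ≤ w := abs_nonneg _
    set k := 2*n^2 + 5*n + 8 with hk
    have hk0 : 0 ≤ k := by nlinarith [sq_nonneg (4*n+5)]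
    have hA : k^2 < w^2 := by rw [hwsq]; nlinarith [sq_nonneg (3*n+10)]
    have hB : w^2 < (k+1)^2 := by
      rw [hwsq]
      rcases hbig with hb | hb <;> nlinarith
    have h1 : k < w := by nlinarith
    have h2 : w < k + 1 := by nlinarith
    omega
end

section
/- For every integer n, the Lehmer quintic polynomial f_n(x) = x^5 + n^2 x^4 − (2n^3+6n^2+10n+10)x^3 + (n^4+5n^3+11n^2+15n+5)x^2 + (n^3+4n^2+10n+10)x + 1 is irreducible over ℚ. -/
open Polynomial NumberField

/-- The Lehmer quintic polynomial
`f_n(x) = x^5 + n^2 x^4 - (2n^3+6n^2+10n+10)x^3 + (n^4+5n^3+11n^2+15n+5)x^2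
          + (n^3+4n^2+10n+10)x + 1`. -/
noncomputable def lehmer (n : ℤ) : Polynomial ℤ :=
  X ^ 5 + C (n ^ 2) * X ^ 4 - C (2*n^3 + 6*n^2 + 10*n + 10) * X ^ 3
    + C (n^4 + 5*n^3 + 11*n^2 + 15*n + 5) * X ^ 2
    + C (n^3 + 4*n^2 + 10*n + 10) * X + 1

private lemma zmod2_cases : ∀ x : ZMod 2, x = 0 ∨ x = 1 := by decide

/-- A quintic over `ZMod 2` with no roots and not divisible by `X^2+X+1`
is irreducible. -/
private lemma irred_of_quintic (f : Polynomial (ZMod 2)) (hd : f.natDegree = 5)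
    (h0 : f.eval 0 ≠ 0) (h1 : f.eval 1 ≠ 0)
    (hq : ¬ ((X ^ 2 + X + 1 : Polynomial (ZMod 2)) ∣ f)) : Irreducible f := by
  have hf0 : f ≠ 0 := fun h => by simp [h] at hd
  have noroot : ∀ x : ZMod 2, f.eval x ≠ 0 := by
    intro x
    rcases zmod2_cases x with rfl | rfl <;> assumption
  have noroot' : ∀ g : Polynomial (ZMod 2), g ∣ f → ∀ x : ZMod 2, g.eval x ≠ 0 := by
    intro g hdvd x hx
    have h2 := eval_dvd (x := x) hdvd
    rw [hx] at h2
    exact noroot x (zero_dvd_iff.mp h2)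
  -- no factor of degree 1 or 2
  have key : ∀ g : Polynomial (ZMod 2), g ∣ f → g.natDegree = 1 ∨ g.natDegree = 2 → False := by
    intro g hdvd hg
    rcases hg with hg | hg
    · obtain ⟨a, ha, b, hab⟩ := Polynomial.natDegree_eq_one.mp hg
      have ha1 : a = 1 := by
        rcases zmod2_cases a with rfl | rfl
        · exact absurd rfl ha
        · rfl
      refine noroot' g hdvd b ?_
      rw [← hab, ha1]
      rcases zmod2_cases b with rfl | rfl <;> simp <;> decide
    · -- degree 2
      have hgsum : g = C (g.coeff 0) + C (g.coeff 1) * X + C (g.coeff 2) * X ^ 2 := by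
        conv_lhs => rw [g.as_sum_range' 3 (by omega)]
        rw [Finset.sum_range_succ, Finset.sum_range_succ, Finset.sum_range_one]
        simp only [← C_mul_X_pow_eq_monomial]
        ring
      have ha1 : g.coeff 2 = 1 := by
        have hane : g.coeff 2 ≠ 0 := by
          have hlc := Polynomial.leadingCoeff_ne_zero.mpr
            (fun h : g = 0 => by simp [h] at hg)
          rwa [Polynomial.leadingCoeff, hg] at hlc
        rcases zmod2_cases (g.coeff 2) with ha | ha
        · exact absurd ha hane
        · exact ha
      rcases zmod2_cases (g.coeff 1) with hb | hb <;>
        rcases zmod2_cases (g.coeff 0) with hc | hc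
      · exact noroot' g hdvd 0 (by rw [hgsum, ha1, hb, hc]; simp)
      · exact noroot' g hdvd 1 (by rw [hgsum, ha1, hb, hc]; simp; decide)
      · exact noroot' g hdvd 0 (by rw [hgsum, ha1, hb, hc]; simp)
      · apply hq
        have hg2 : g = X ^ 2 + X + 1 := by
          rw [hgsum, ha1, hb, hc]; simp only [C_1]; ring
        rwa [hg2] at hdvd
  -- every nonzero nonunit has positive degree
  have posdeg : ∀ p : Polynomial (ZMod 2), p ≠ 0 → ¬ IsUnit p → 1 ≤ p.natDegree := by
    intro p hp hpu
    by_contra h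
    push_neg at h
    have hp0 : p.natDegree = 0 := by omega
    apply hpu
    rw [Polynomial.eq_C_of_natDegree_eq_zero hp0]
    refine Polynomial.isUnit_C.mpr (isUnit_iff_ne_zero.mpr ?_)
    intro hc
    apply hp
    rw [Polynomial.eq_C_of_natDegree_eq_zero hp0, hc, map_zero]
  constructor
  · intro hu
    have := Polynomial.natDegree_eq_zero_of_isUnit hu
    omega
  · rintro p q rfl
    by_contra hcon
    push_neg at hcon
    obtain ⟨hp, hq'⟩ := hcon
    have hpne : p ≠ 0 := fun h => by simp [h] at hf0
    have hqne : q ≠ 0 := fun h => by simp [h] at hf0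
    have hdeg : p.natDegree + q.natDegree = 5 := by
      rw [← Polynomial.natDegree_mul hpne hqne]; exact hd
    have hp1 := posdeg p hpne hp
    have hq1 := posdeg q hqne hq'
    have hsmall : p.natDegree = 1 ∨ p.natDegree = 2 ∨ q.natDegree = 1 ∨ q.natDegree = 2 := by
      omega
    rcases hsmall with h | h | h | h
    · exact key p ⟨q, rfl⟩ (Or.inl h)
    · exact key p ⟨q, rfl⟩ (Or.inr h)
    · exact key q ⟨p, mul_comm p q⟩ (Or.inl h)
    · exact key q ⟨p, mul_comm p q⟩ (Or.inr h)

private lemma two_eq_zero_poly : (2 : Polynomial (ZMod 2)) = 0 :=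
  CharTwo.two_eq_zero

private lemma not_dvd_trick (f : Polynomial (ZMod 2)) (q : Polynomial (ZMod 2))
    (hid : f - q * (X ^ 3 + 1) = 1) : ¬ ((X ^ 2 + X + 1 : Polynomial (ZMod 2)) ∣ f) := by
  intro hdvd
  have hfac : (X ^ 3 + 1 : Polynomial (ZMod 2)) = (X + 1) * (X ^ 2 + X + 1) := by
    linear_combination (-(X ^ 2 + X) : Polynomial (ZMod 2)) * two_eq_zero_poly
  have hdvd3 : (X ^ 2 + X + 1 : Polynomial (ZMod 2)) ∣ X ^ 3 + 1 :=
    ⟨X + 1, by rw [hfac]; ring⟩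
  have hone : (X ^ 2 + X + 1 : Polynomial (ZMod 2)) ∣ 1 := by
    have hsub : (X ^ 2 + X + 1 : Polynomial (ZMod 2)) ∣ f - q * (X ^ 3 + 1) :=
      dvd_sub hdvd (Dvd.dvd.mul_left hdvd3 q)
    rwa [hid] at hsub
  have hdeg0 := Polynomial.natDegree_eq_zero_of_isUnit (isUnit_of_dvd_one hone)
  have h2d : (X ^ 2 + X + 1 : Polynomial (ZMod 2)).natDegree = 2 := by
    compute_degree!
  omega

/-- The Lehmer quintic polynomial is irreducible over `ℚ` for every integer `n`. -/
theorem lehmer_irreducible (n : ℤ) :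
    Irreducible ((lehmer n).map (Int.castRingHom ℚ)) := by
  have hmonic : (lehmer n).Monic := by unfold lehmer; monicity!
  have hmap2 : Irreducible ((lehmer n).map (Int.castRingHom (ZMod 2))) := by
    rcases zmod2_cases ((n : ZMod 2)) with hn | hn
    · have hmapeq : (lehmer n).map (Int.castRingHom (ZMod 2)) =
          X ^ 5 + X ^ 2 + 1 := by
        unfold lehmer
        simp only [Polynomial.map_add, Polynomial.map_sub, Polynomial.map_mul,
          Polynomial.map_pow, Polynomial.map_one, Polynomial.map_X, Polynomial.map_C,
          Int.coe_castRingHom]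
        have e1 : ((n ^ 2 : ℤ) : ZMod 2) = 0 := by push_cast; rw [hn]; ring
        have e2 : ((2*n^3 + 6*n^2 + 10*n + 10 : ℤ) : ZMod 2) = 0 := by
          push_cast; rw [hn]; decide
        have e3 : ((n^4 + 5*n^3 + 11*n^2 + 15*n + 5 : ℤ) : ZMod 2) = 1 := by
          push_cast; rw [hn]; decide
        have e4 : ((n^3 + 4*n^2 + 10*n + 10 : ℤ) : ZMod 2) = 0 := by
          push_cast; rw [hn]; decide
        rw [e1, e2, e3, e4, map_zero, map_one]
        ring
      rw [hmapeq]
      refine irred_of_quintic _ (by compute_degree!) ?_ ?_ ?_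
      · simp only [eval_add, eval_pow, eval_X, eval_one]; decide
      · simp only [eval_add, eval_pow, eval_X, eval_one]; decide
      · exact not_dvd_trick _ (X ^ 2) (by ring)
    · have hmapeq : (lehmer n).map (Int.castRingHom (ZMod 2)) =
          X ^ 5 + X ^ 4 + X ^ 2 + X + 1 := by
        unfold lehmer
        simp only [Polynomial.map_add, Polynomial.map_sub, Polynomial.map_mul,
          Polynomial.map_pow, Polynomial.map_one, Polynomial.map_X, Polynomial.map_C,
          Int.coe_castRingHom]
        have e1 : ((n ^ 2 : ℤ) : ZMod 2) = 1 := by push_cast; rw [hn]; ring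
        have e2 : ((2*n^3 + 6*n^2 + 10*n + 10 : ℤ) : ZMod 2) = 0 := by
          push_cast; rw [hn]; decide
        have e3 : ((n^4 + 5*n^3 + 11*n^2 + 15*n + 5 : ℤ) : ZMod 2) = 1 := by
          push_cast; rw [hn]; decide
        have e4 : ((n^3 + 4*n^2 + 10*n + 10 : ℤ) : ZMod 2) = 1 := by
          push_cast; rw [hn]; decide
        rw [e1, e2, e3, e4, map_zero, map_one]
        ring
      rw [hmapeq]
      refine irred_of_quintic _ (by compute_degree!) ?_ ?_ ?_
      · simp only [eval_add, eval_pow, eval_X, eval_one]; decide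
      · simp only [eval_add, eval_pow, eval_X, eval_one]; decide
      · exact not_dvd_trick _ (X ^ 2 + X) (by ring)
  have hZ : Irreducible (lehmer n) :=
    hmonic.irreducible_of_irreducible_map (Int.castRingHom (ZMod 2)) _ hmap2
  exact (Polynomial.IsPrimitive.Int.irreducible_iff_irreducible_map_cast
    hmonic.isPrimitive).mp hZ
end

section
/- Let K be a number field with ring of integers O_K. The O_K-module Int(O_K) admits a regular basis, i.e., an O_K-basis (f_q)_{q ≥ 0} with deg(f_q) = q for every q, if and only if the fractional ideal J_q(K) is principal for every integer q ≥ 1. -/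
open Polynomial NumberField

/-- The set of integer-valued polynomials on the ring of integers of `K`,
i.e. `Int(O_K) = {f ∈ K[X] : f(O_K) ⊆ O_K}`. -/
def IntValued (K : Type) [Field K] [NumberField K] : Set (Polynomial K) :=
  {f | ∀ x : 𝓞 K, ∃ y : 𝓞 K, f.eval (x : K) = (y : K)}

/-- The fractional ideal `𝔍_q(K)` consisting of `0` together with the leading
coefficients of the degree-`q` integer-valued polynomials on `O_K`, as an
`O_K`-submodule of `K`. -/
noncomputable def polyaIdeal (K : Type) [Field K] [NumberField K] (q : ℕ) :
    Submodule (𝓞 K) K where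
  carrier := {0} ∪ {a | ∃ f ∈ IntValued K, f.degree = q ∧ f.leadingCoeff = a}
  zero_mem' := Or.inl rfl
  add_mem' := by
    rintro a b (rfl | ⟨f, hf, hfd, rfl⟩) hb
    · simpa using hb
    · rcases hb with (rfl | ⟨g, hg, hgd, rfl⟩)
      · simpa using Or.inr ⟨f, hf, hfd, rfl⟩
      · by_cases h : f.leadingCoeff + g.leadingCoeff = 0
        · exact Or.inl (by simp [h])
        · have hfq : f.natDegree = q := natDegree_eq_of_degree_eq_some hfd
          have hgq : g.natDegree = q := natDegree_eq_of_degree_eq_some hgd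
          have h1 : f.coeff q = f.leadingCoeff := by rw [← hfq, coeff_natDegree]
          have h2 : g.coeff q = g.leadingCoeff := by rw [← hgq, coeff_natDegree]
          have hcoeff : (f + g).coeff q = f.leadingCoeff + g.leadingCoeff := by
            rw [coeff_add, h1, h2]
          have hdeg : (f + g).degree = q := by
            apply le_antisymm
            · exact le_trans (degree_add_le f g) (by simp [hfd, hgd])
            · exact le_degree_of_ne_zero (by rw [hcoeff]; exact h)
          refine Or.inr ⟨f + g, ?_, hdeg, ?_⟩
          · intro x
            obtain ⟨y, hy⟩ := hf x
            obtain ⟨z, hz⟩ := hg x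
            exact ⟨y + z, by push_cast [eval_add, hy, hz]; ring⟩
          · rw [leadingCoeff, natDegree_eq_of_degree_eq_some hdeg, hcoeff]
  smul_mem' := by
    rintro c a (rfl | ⟨f, hf, hfd, rfl⟩)
    · exact Or.inl (by simp)
    · by_cases hc : (c : K) = 0
      · exact Or.inl (by simp [Algebra.smul_def, ← RingOfIntegers.coe_eq_algebraMap, hc])
      · refine Or.inr ⟨C (c : K) * f, ?_, ?_, ?_⟩
        · intro x
          obtain ⟨y, hy⟩ := hf x
          exact ⟨c * y, by push_cast [eval_mul, eval_C, hy]; ring⟩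
        · rw [degree_mul, degree_C hc, hfd, zero_add]
        · rw [leadingCoeff_mul, leadingCoeff_C, Algebra.smul_def]

/-- `Int(O_K)` as an `O_K`-submodule of `K[X]`. -/
def intPolySubmodule (K : Type) [Field K] [NumberField K] :
    Submodule (𝓞 K) (Polynomial K) where
  carrier := IntValued K
  zero_mem' := fun x => ⟨0, by simp⟩
  add_mem' := by
    intro f g hf hg x
    obtain ⟨y, hy⟩ := hf x
    obtain ⟨z, hz⟩ := hg x
    exact ⟨y + z, by push_cast [eval_add, hy, hz]; ring⟩
  smul_mem' := by
    intro c f hf x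
    obtain ⟨y, hy⟩ := hf x
    refine ⟨c * y, ?_⟩
    rw [Polynomial.eval_smul, hy, Algebra.smul_def]
    push_cast
    ring

set_option linter.unusedSectionVars false
section MainHelpers
variable {K : Type} [Field K] [NumberField K]

lemma aux_smul_eq_zero {c : 𝓞 K} {x : K} (hx : x ≠ 0) (h : c • x = 0) : c = 0 := by
  rw [Algebra.smul_def, mul_eq_zero] at h
  rcases h with h | h
  · exact RingOfIntegers.coe_eq_zero_iff.mp h
  · exact absurd h hx

lemma aux_coeff_sum_smul (p : ℕ → Polynomial K) (hp : ∀ i, (p i).degree = i)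
    (l : ℕ →₀ 𝓞 K) (m : ℕ) (hm : ∀ j ∈ l.support, j ≤ m) :
    (l.sum fun i a => a • p i).coeff m = l m • (p m).leadingCoeff := by
  have hlc : (p m).coeff m = (p m).leadingCoeff := by
    rw [leadingCoeff, natDegree_eq_of_degree_eq_some (hp m)]
  rw [Finsupp.sum, finset_sum_coeff, Finset.sum_eq_single m]
  · exact (coeff_smul (l m) (p m) m).trans (congrArg _ hlc)
  · intro j hj hjm
    rw [show (l j • p j).coeff m = l j • (p j).coeff m from coeff_smul _ _ _, coeff_eq_zero_of_degree_lt, smul_zero]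
    rw [hp j]
    exact_mod_cast lt_of_le_of_ne (hm j hj) hjm
  · intro hm'
    rw [Finsupp.notMem_support_iff.mp hm', show (0 : 𝓞 K) • p m = 0 from zero_smul _ _, coeff_zero]

lemma aux_pne (p : Polynomial K) {m : ℕ} (hp : p.degree = m) : p.leadingCoeff ≠ 0 := by
  intro h
  rw [leadingCoeff_eq_zero] at h
  rw [h, degree_zero] at hp
  exact (WithBot.bot_ne_coe) hp

lemma mem_polyaIdeal {q : ℕ} {a : K} :
    a ∈ polyaIdeal K q ↔ a = 0 ∨ ∃ f ∈ IntValued K, f.degree = q ∧ f.leadingCoeff = a :=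
  Iff.rfl

lemma aux_coe_lc (w : ℕ → intPolySubmodule K) (l : ℕ →₀ 𝓞 K) :
    ((Finsupp.linearCombination (𝓞 K) w l : intPolySubmodule K) : Polynomial K)
      = l.sum fun i a => a • ((w i : Polynomial K)) := by
  rw [Finsupp.linearCombination_apply]
  simp [Finsupp.sum]
  rfl

end MainHelpers

/-- `Int(O_K)` admits a regular basis — an `O_K`-basis `(f_q)_{q ≥ 0}` with
`deg f_q = q` for all `q` — if and only if the fractional ideals `𝔍_q(K)` are principal
for all `q ≥ 1`. -/
theorem regular_basis_iff_polyaIdeal_principal (K : Type) [Field K] [NumberField K] :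
    (∃ b : Module.Basis ℕ (𝓞 K) (intPolySubmodule K),
      ∀ q : ℕ, ((b q : Polynomial K)).degree = q) ↔
    (∀ q : ℕ, 1 ≤ q → (polyaIdeal K q).IsPrincipal) := by
  constructor
  · rintro ⟨b, hb⟩ q _
    refine ⟨⟨((b q : Polynomial K)).leadingCoeff, le_antisymm ?_ ?_⟩⟩
    · intro a ha
      rw [mem_polyaIdeal] at ha
      rcases ha with rfl | ⟨f, hfI, hfd, rfl⟩
      · exact zero_mem _
      · set l := b.repr ⟨f, hfI⟩ with hl
        have h1 := b.linearCombination_repr ⟨f, hfI⟩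
        have hf_eq : (l.sum fun i a => a • ((b i : Polynomial K))) = f := by
          rw [← aux_coe_lc (fun i => b i) l, hl, h1]
        have hf0 : f ≠ 0 := fun h => by simp [h] at hfd
        have hl0 : l ≠ 0 := by
          intro h
          apply hf0
          rw [← hf_eq, h, Finsupp.sum_zero_index]
        have hne : l.support.Nonempty := Finsupp.support_nonempty_iff.mpr hl0
        set m := l.support.max' hne with hmdef
        have hmq : m ≤ q := by
          by_contra hmq
          push_neg at hmq
          have h2 := aux_coeff_sum_smul (fun i => ((b i : Polynomial K))) hb l m
            (fun j hj => l.support.le_max' j hj)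
          rw [hf_eq] at h2
          have h3 : f.coeff m = 0 := coeff_eq_zero_of_degree_lt (by rw [hfd]; exact_mod_cast hmq)
          have h4 : l m = 0 := aux_smul_eq_zero (aux_pne _ (hb m)) (by rw [← h2]; exact h3)
          exact Finsupp.mem_support_iff.mp (l.support.max'_mem hne) h4
        have h5 := aux_coeff_sum_smul (fun i => ((b i : Polynomial K))) hb l q
          (fun j hj => le_trans (l.support.le_max' j hj) hmq)
        rw [hf_eq] at h5
        have h6 : f.coeff q = f.leadingCoeff := by
          rw [leadingCoeff, natDegree_eq_of_degree_eq_some hfd]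
        rw [h6] at h5
        exact Submodule.mem_span_singleton.mpr ⟨l q, h5.symm⟩
    · rw [Submodule.span_singleton_le_iff_mem, mem_polyaIdeal]
      exact Or.inr ⟨((b q : Polynomial K)), (b q).2, hb q, rfl⟩
  · intro h
    have H : ∀ q : ℕ, ∃ g : intPolySubmodule K, ((g : Polynomial K)).degree = q ∧
        polyaIdeal K q = Submodule.span (𝓞 K) {((g : Polynomial K)).leadingCoeff} := by
      intro q
      have hXq : (1 : K) ∈ polyaIdeal K q := by
        rw [mem_polyaIdeal]
        refine Or.inr ⟨X ^ q, fun x => ⟨x ^ q, by push_cast; simp⟩,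
          degree_X_pow q, leadingCoeff_X_pow q⟩
      rcases Nat.eq_zero_or_pos q with rfl | hq
      · refine ⟨⟨1, fun x => ⟨1, by simp⟩⟩, degree_one, le_antisymm ?_ ?_⟩
        · intro a ha
          rw [mem_polyaIdeal] at ha
          rcases ha with rfl | ⟨f, hfI, hfd, rfl⟩
          · exact zero_mem _
          · obtain ⟨y, hy⟩ := hfI 0
            refine Submodule.mem_span_singleton.mpr ⟨y, ?_⟩
            have hfC : f = C (f.coeff 0) := eq_C_of_degree_le_zero (le_of_eq hfd)
            have hc0 : f.coeff 0 = (y : K) := by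
              rw [coeff_zero_eq_eval_zero, ← hy]
              norm_num
            show y • (1 : Polynomial K).leadingCoeff = f.leadingCoeff
            rw [leadingCoeff_one]
            conv_rhs => rw [hfC]
            rw [leadingCoeff_C, hc0, Algebra.smul_def, mul_one]
        · rw [Submodule.span_singleton_le_iff_mem]
          show (1 : Polynomial K).leadingCoeff ∈ polyaIdeal K 0
          rw [leadingCoeff_one]
          exact hXq
      · obtain ⟨a, ha⟩ := (h q hq).principal
        have h1 : (1 : K) ∈ Submodule.span (𝓞 K) {a} := by rw [← ha]; exact hXq
        have ha0 : a ≠ 0 := by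
          rintro rfl
          rw [Submodule.span_zero_singleton] at h1
          simp at h1
        have haI : a ∈ polyaIdeal K q := by
          rw [ha]; exact Submodule.mem_span_singleton_self a
        rw [mem_polyaIdeal] at haI
        rcases haI with rfl | ⟨f, hfI, hfd, hfa⟩
        · exact absurd rfl ha0
        · exact ⟨⟨f, hfI⟩, hfd, by rw [show ((⟨f, hfI⟩ : intPolySubmodule K) : Polynomial K).leadingCoeff = a from hfa]; exact ha⟩
    set v : ℕ → intPolySubmodule K := fun q => (H q).choose with hv
    have hp : ∀ i, ((v i : Polynomial K)).degree = i := fun i => (H i).choose_spec.1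
    have hspan : ∀ i, polyaIdeal K i
        = Submodule.span (𝓞 K) {((v i : Polynomial K)).leadingCoeff} :=
      fun i => (H i).choose_spec.2
    have hli : LinearIndependent (𝓞 K) v := by
      rw [linearIndependent_iff]
      intro l hl
      by_contra hl0
      have hne : l.support.Nonempty := Finsupp.support_nonempty_iff.mpr hl0
      set m := l.support.max' hne with hmdef
      have hcoe : (l.sum fun i a => a • ((v i : Polynomial K))) = 0 := by
        rw [← aux_coe_lc v l, hl]
        rfl
      have h2 := aux_coeff_sum_smul (fun i => ((v i : Polynomial K))) hp l m
        (fun j hj => l.support.le_max' j hj)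
      rw [hcoe, coeff_zero] at h2
      exact Finsupp.mem_support_iff.mp (l.support.max'_mem hne)
        (aux_smul_eq_zero (aux_pne _ (hp m)) h2.symm)
    have key : ∀ n : ℕ, ∀ f, ∀ hf : f ∈ intPolySubmodule K, f.degree < n →
        (⟨f, hf⟩ : intPolySubmodule K) ∈ Submodule.span (𝓞 K) (Set.range v) := by
      intro n
      induction n with
      | zero =>
        intro f hf hdeg
        have hf0 : f = 0 := by
          by_contra hf0
          rw [degree_eq_natDegree hf0] at hdeg
          exact Nat.not_lt_zero _ (by exact_mod_cast hdeg)
        have : (⟨f, hf⟩ : intPolySubmodule K) = 0 := Subtype.ext hf0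
        rw [this]
        exact zero_mem _
      | succ n ih =>
        intro f hf hdeg
        by_cases hf0 : f = 0
        · have : (⟨f, hf⟩ : intPolySubmodule K) = 0 := Subtype.ext hf0
          rw [this]
          exact zero_mem _
        · set d := f.natDegree with hd
          have hfd : f.degree = d := degree_eq_natDegree hf0
          have hdn : d ≤ n := by
            rw [hfd] at hdeg
            exact_mod_cast Nat.lt_succ_iff.mp (by exact_mod_cast hdeg)
          have hlcm : f.leadingCoeff ∈ polyaIdeal K d :=
            mem_polyaIdeal.mpr (Or.inr ⟨f, hf, hfd, rfl⟩)
          rw [hspan d] at hlcm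
          obtain ⟨c, hc⟩ := Submodule.mem_span_singleton.mp hlcm
          have hc0 : (c : K) ≠ 0 := by
            intro h0
            apply hf0
            rw [← leadingCoeff_eq_zero, ← hc, Algebra.smul_def,
              ← RingOfIntegers.coe_eq_algebraMap, h0, zero_mul]
          have hcv : c • ((v d : Polynomial K)) = C ((c : K)) * (v d : Polynomial K) := by
            rw [← smul_eq_C_mul]; exact algebra_compatible_smul K c ((v d : Polynomial K))
          have hdeg_cv : (c • ((v d : Polynomial K))).degree = f.degree := by
            rw [hcv, degree_mul, degree_C hc0, zero_add, hp d, hfd]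
          have hlc_cv : (c • ((v d : Polynomial K))).leadingCoeff = f.leadingCoeff := by
            rw [hcv, leadingCoeff_mul, leadingCoeff_C, ← hc, Algebra.smul_def,
              ← RingOfIntegers.coe_eq_algebraMap]
          set g := f - c • ((v d : Polynomial K)) with hg
          have hgdeg : g.degree < f.degree := degree_sub_lt hdeg_cv.symm hf0 hlc_cv.symm
          have hgI : g ∈ intPolySubmodule K := sub_mem hf (Submodule.smul_mem _ c (v d).2)
          have hgn : g.degree < n := by
            apply lt_of_lt_of_le (lt_of_lt_of_eq hgdeg hfd)
            exact_mod_cast hdn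
          have hmem := ih g hgI hgn
          have hfg : (⟨f, hf⟩ : intPolySubmodule K) = ⟨g, hgI⟩ + c • v d := by
            refine Subtype.ext ?_
            show f = g + c • ((v d : Polynomial K))
            rw [hg]
            ring
          rw [hfg]
          exact Submodule.add_mem _ hmem
            (Submodule.smul_mem _ c (Submodule.subset_span ⟨d, rfl⟩))
    have htop : ⊤ ≤ Submodule.span (𝓞 K) (Set.range v) := by
      rintro ⟨f, hf⟩ -
      exact key (f.natDegree + 1) f hf
        (lt_of_le_of_lt degree_le_natDegree (by exact_mod_cast Nat.lt_succ_self _))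
    refine ⟨Module.Basis.mk hli htop, fun q => ?_⟩
    rw [Module.Basis.mk_apply]
    exact hp q
end

section
/- Let f(X) ∈ ℤ[X] be a monic polynomial of degree 4 that is not the square of a polynomial. Then every integer solution (x, y) of the equation Y^2 = f(X) satisfies |x| ≤ 26·H(f)^3, where H(f) denotes the maximum of the absolute values of the coefficients of f. -/
open Polynomial NumberField


lemma sandwich_aux (a b r : ℤ) (heq : a ^ 2 = b ^ 2 + r) (hr : r ≠ 0)
    (hrb : |r| + 2 ≤ 2 * |b|) : False := by
  have ha2 : a ^ 2 = |a| ^ 2 := (sq_abs a).symm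
  have hb2 : b ^ 2 = |b| ^ 2 := (sq_abs b).symm
  have ha0 : 0 ≤ |a| := abs_nonneg a
  have hb0 : 0 ≤ |b| := abs_nonneg b
  have hup := le_abs_self r
  have hlo := neg_abs_le r
  rcases lt_or_gt_of_ne hr with hneg | hpos
  · have h1 : |a| < |b| := by nlinarith
    have h2 : |a| + 1 ≤ |b| := h1
    nlinarith
  · have h1 : |b| < |a| := by nlinarith
    have h2 : |b| + 1 ≤ |a| := h1
    nlinarith

lemma masser_case_d0 (H X e : ℤ) (hH : 1 ≤ H) (hxb : X ≤ e ^ 2 + H)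
    (he : 2 * |e| ≤ H) (hx : 26 * H ^ 3 + 1 ≤ X) : False := by
  have h1 : 4 * e ^ 2 ≤ H ^ 2 := by nlinarith [sq_abs e, abs_nonneg e]
  nlinarith

lemma masser_case_d1 (H X T dd ee : ℤ) (hH : 1 ≤ H) (hT : 1 ≤ T) (hdd : 1 ≤ dd)
    (hee : 0 ≤ ee) (hxT : X * T ≤ ee ^ 2 + H) (hde : 2 * (dd * ee) ≤ H + T)
    (hTub : T ≤ H + 2 * (dd * ee)) (heH : 2 * ee ≤ H + dd ^ 2) (hdH : 2 * dd ≤ H)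
    (hx : 26 * H ^ 3 + 1 ≤ X) : False := by
  have h2e : 2 * ee ≤ H + T := by nlinarith
  have h4e : 4 * ee ^ 2 ≤ (H + T) ^ 2 := by nlinarith
  have hstep : 4 * X * T ≤ (H ^ 2 + 6 * H + T) * T := by nlinarith
  have hX4 : 4 * X ≤ H ^ 2 + 6 * H + T := le_of_mul_le_mul_right (by nlinarith) (by nlinarith)
  have hdd2 : 4 * dd ^ 2 ≤ H ^ 2 := by nlinarith
  have h16 : 16 * (dd * ee) ≤ 4 * H ^ 2 + H ^ 3 := by nlinarith
  have h8T : 8 * T ≤ 8 * H + 4 * H ^ 2 + H ^ 3 := by nlinarith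
  nlinarith

lemma masser_main_ineq (H X : ℤ) (hH : 1 ≤ H) (hx : 26 * H ^ 3 + 1 ≤ X) :
    104 * H ^ 3 * X + 64 * H + 25 * H ^ 4 + 2 ≤ 16 * X ^ 2 - 8 * H * X - (8 * H + 2 * H ^ 2) := by
  have hH2 : H ≤ H ^ 2 := by nlinarith
  have hH3 : H ^ 2 ≤ H ^ 3 := by nlinarith
  have hXH : H ≤ X := by nlinarith
  have hX0 : 0 ≤ X := by linarith
  have e1 : 416 * (H ^ 3 * X) + 16 * X ≤ 16 * X ^ 2 := by nlinarith
  have e2 : 8 * H * X ≤ 8 * (H ^ 3 * X) := by nlinarith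
  have e3 : 25 * H ^ 4 ≤ 25 * (H ^ 3 * X) := by nlinarith
  have e4 : 64 * H + 8 * H + 2 * H ^ 2 + 2 ≤ 76 * (H ^ 3 * X) := by nlinarith
  linarith

lemma abs3 (a b c : ℤ) : |a + b + c| ≤ |a| + |b| + |c| :=
  (abs_add_le _ _).trans (add_le_add_left (abs_add_le a b) _)

lemma boundV (H b c xv : ℤ) (hH : 1 ≤ H) (hb : |b| ≤ H) (hc : |c| ≤ H) :
    |4 * c * xv + (4 * b - c ^ 2)| ≤ 4 * H * |xv| + (4 * H + H ^ 2) := by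
  have h4c : |4 * c| ≤ 4 * H := by
    rw [abs_mul]
    have : |(4:ℤ)| = 4 := by norm_num
    rw [this]; linarith
  have e1 : |4 * c * xv| ≤ 4 * H * |xv| := by
    rw [show (4:ℤ) * c * xv = (4 * c) * xv by ring, abs_mul]
    exact mul_le_mul h4c le_rfl (abs_nonneg xv) (by positivity)
  have e2 : |4 * b - c ^ 2| ≤ 4 * H + H ^ 2 := by
    calc |4 * b - c ^ 2| ≤ |4 * b| + |c ^ 2| := abs_sub _ _
      _ ≤ 4 * H + H ^ 2 := by
          have : |4 * b| ≤ 4 * H := by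
            rw [abs_mul]
            have : |(4:ℤ)| = 4 := by norm_num
            rw [this]; linarith
          have h2 : |c ^ 2| ≤ H ^ 2 := by
            rw [abs_pow]; exact pow_le_pow_left₀ (abs_nonneg c) hc 2
          linarith
  calc |4 * c * xv + (4 * b - c ^ 2)| ≤ |4 * c * xv| + |4 * b - c ^ 2| := abs_add_le _ _
    _ ≤ 4 * H * |xv| + (4 * H + H ^ 2) := add_le_add e1 e2

lemma boundG (H b c xv g : ℤ) (hH : 1 ≤ H) (hb : |b| ≤ H) (hc : |c| ≤ H)
    (hg : g = 8 * xv ^ 2 + 4 * c * xv + (4 * b - c ^ 2)) :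
    16 * |xv| ^ 2 - 8 * H * |xv| - (8 * H + 2 * H ^ 2) ≤ 2 * |g| := by
  have hv := boundV H b c xv hH hb hc
  have heq : (8 * xv ^ 2 : ℤ) = g - (4 * c * xv + (4 * b - c ^ 2)) := by rw [hg]; ring
  have h2 : |8 * xv ^ 2| ≤ |g| + |4 * c * xv + (4 * b - c ^ 2)| := by
    rw [heq]; exact abs_sub _ _
  have h3 : |8 * xv ^ 2| = 8 * |xv| ^ 2 := by
    rw [abs_of_nonneg (by positivity), sq_abs]
  linarith

lemma mul_abs_le (a b A B : ℤ) (h1 : |a| ≤ A) (h2 : |b| ≤ B) : |a * b| ≤ A * B := by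
  rw [abs_mul]
  exact mul_le_mul h1 h2 (abs_nonneg b) (le_trans (abs_nonneg a) h1)

lemma boundR (H a b c d r xv : ℤ) (hH : 1 ≤ H) (ha : |a| ≤ H) (hb : |b| ≤ H)
    (hc : |c| ≤ H) (hd : |d| ≤ H)
    (hr : r = (64 * a - 32 * b * c + 8 * c ^ 3) * xv + (64 * d - (4 * b - c ^ 2) ^ 2)) :
    |r| ≤ 104 * H ^ 3 * |xv| + (64 * H + 25 * H ^ 4) := by
  have hH2 : H ≤ H ^ 2 := by nlinarith
  have hH3 : H ^ 2 ≤ H ^ 3 := by nlinarith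
  have hH4 : H ^ 3 ≤ H ^ 4 := by nlinarith
  have hA : |64 * a - 32 * b * c + 8 * c ^ 3| ≤ 104 * H ^ 3 := by
    have e0 : (64 * a - 32 * b * c + 8 * c ^ 3 : ℤ)
        = 64 * a + -(32 * (b * c)) + 8 * c ^ 3 := by ring
    have e1 : |64 * a| ≤ 64 * H := by
      rw [abs_mul]; have : |(64:ℤ)| = 64 := by norm_num
      rw [this]; linarith
    have e2 : |-(32 * (b * c))| ≤ 32 * H ^ 2 := by
      rw [abs_neg, abs_mul]
      have h64 : |(32:ℤ)| = 32 := by norm_num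
      rw [h64]
      have := mul_abs_le b c H H hb hc
      nlinarith [this]
    have e3 : |8 * c ^ 3| ≤ 8 * H ^ 3 := by
      rw [abs_mul, abs_pow]
      have h8 : |(8:ℤ)| = 8 := by norm_num
      rw [h8]
      have := pow_le_pow_left₀ (abs_nonneg c) hc 3
      linarith
    rw [e0]
    calc |64 * a + -(32 * (b * c)) + 8 * c ^ 3|
        ≤ |64 * a| + |-(32 * (b * c))| + |8 * c ^ 3| := abs3 _ _ _
      _ ≤ 64 * H + 32 * H ^ 2 + 8 * H ^ 3 := by linarith
      _ ≤ 104 * H ^ 3 := by linarith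
  have hB : |64 * d - (4 * b - c ^ 2) ^ 2| ≤ 64 * H + 25 * H ^ 4 := by
    have e1 : |64 * d| ≤ 64 * H := by
      rw [abs_mul]; have : |(64:ℤ)| = 64 := by norm_num
      rw [this]; linarith
    have e2 : |4 * b - c ^ 2| ≤ 4 * H + H ^ 2 := by
      calc |4 * b - c ^ 2| ≤ |4 * b| + |c ^ 2| := abs_sub _ _
        _ ≤ 4 * H + H ^ 2 := by
            have f1 : |4 * b| ≤ 4 * H := by
              rw [abs_mul]; have : |(4:ℤ)| = 4 := by norm_num
              rw [this]; linarith
            have f2 : |c ^ 2| ≤ H ^ 2 := by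
              rw [abs_pow]; exact pow_le_pow_left₀ (abs_nonneg c) hc 2
            linarith
    have e3 : |(4 * b - c ^ 2) ^ 2| ≤ (4 * H + H ^ 2) ^ 2 := by
      rw [abs_pow]
      exact pow_le_pow_left₀ (abs_nonneg _) e2 2
    have e4 : (4 * H + H ^ 2 : ℤ) ^ 2 ≤ 25 * H ^ 4 := by nlinarith
    calc |64 * d - (4 * b - c ^ 2) ^ 2| ≤ |64 * d| + |(4 * b - c ^ 2) ^ 2| := abs_sub _ _
      _ ≤ 64 * H + 25 * H ^ 4 := by linarith
  have hAx : |(64 * a - 32 * b * c + 8 * c ^ 3) * xv| ≤ 104 * H ^ 3 * |xv| := by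
    rw [abs_mul]
    exact mul_le_mul hA le_rfl (abs_nonneg xv) (by positivity)
  calc |r| ≤ |(64 * a - 32 * b * c + 8 * c ^ 3) * xv| + |64 * d - (4 * b - c ^ 2) ^ 2| := by
        rw [hr]; exact abs_add_le _ _
    _ ≤ 104 * H ^ 3 * |xv| + (64 * H + 25 * H ^ 4) := add_le_add hAx hB

/-- Masser: if `f ∈ ℤ[X]` is monic of degree `4` and not the square of a polynomial,
then every integral solution `(x, y)` of `Y² = f(X)` satisfies `|x| ≤ 26·H(f)³`, where
`H(f)` is the maximum of the absolute values of the coefficients of `f`. -/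
theorem masser_integral_points_bound (f : Polynomial ℤ) (hmonic : f.Monic)
    (hdeg : f.natDegree = 4) (hsq : ∀ g : Polynomial ℤ, f ≠ g ^ 2)
    (x y : ℤ) (h : y ^ 2 = f.eval x) :
    |x| ≤ 26 * ((f.support.sup fun i => (f.coeff i).natAbs : ℕ) : ℤ) ^ 3 := by
  set H : ℤ := ((f.support.sup fun i => (f.coeff i).natAbs : ℕ) : ℤ) with hHdef
  set c3 : ℤ := f.coeff 3 with hc3def
  set c2 : ℤ := f.coeff 2 with hc2def
  set c1 : ℤ := f.coeff 1 with hc1def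
  set c0 : ℤ := f.coeff 0 with hc0def
  have hc4 : f.coeff 4 = 1 := by
    have := hmonic.coeff_natDegree
    rwa [hdeg] at this
  have habs : ∀ i, |f.coeff i| ≤ H := by
    intro i
    rcases eq_or_ne (f.coeff i) 0 with h0 | h0
    · rw [h0, abs_zero, hHdef]
      positivity
    · have hmem : i ∈ f.support := Polynomial.mem_support_iff.mpr h0
      have := Finset.le_sup (f := fun i => (f.coeff i).natAbs) hmem
      rw [hHdef, Int.abs_eq_natAbs]
      exact_mod_cast this
  have hH1 : (1 : ℤ) ≤ H := by
    have := habs 4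
    rwa [hc4] at this
  have hb3 : |c3| ≤ H := by rw [hc3def]; exact habs 3
  have hb2 : |c2| ≤ H := by rw [hc2def]; exact habs 2
  have hb1 : |c1| ≤ H := by rw [hc1def]; exact habs 1
  have hb0 : |c0| ≤ H := by rw [hc0def]; exact habs 0
  have hfx : ∀ t : ℤ, f.eval t = t ^ 4 + c3 * t ^ 3 + c2 * t ^ 2 + c1 * t + c0 := by
    intro t
    rw [hc3def, hc2def, hc1def, hc0def]
    rw [show f.eval t = _ from Polynomial.eval_eq_sum_range t, hdeg]
    simp [Finset.sum_range_succ, hc4]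
    ring
  by_contra hcon
  push_neg at hcon
  have hx : 26 * H ^ 3 + 1 ≤ |x| := Int.add_one_le_iff.mpr hcon
  have hx0 : (0 : ℤ) ≤ |x| := abs_nonneg x
  set gx : ℤ := 8 * x ^ 2 + 4 * c3 * x + (4 * c2 - c3 ^ 2) with hgxdef
  set rx : ℤ := (64 * c1 - 32 * c2 * c3 + 8 * c3 ^ 3) * x + (64 * c0 - (4 * c2 - c3 ^ 2) ^ 2)
    with hrxdef
  have heq : (8 * y) ^ 2 = gx ^ 2 + rx := by
    rw [hgxdef, hrxdef]
    linear_combination (64 : ℤ) * h + 64 * hfx x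
  rcases eq_or_ne rx 0 with hr0 | hr0
  · -- rx = 0 : 8y = ±gx, so 8 ∣ gx
    have hfac : (8 * y - gx) * (8 * y + gx) = 0 := by linear_combination heq + hr0
    have hdvd : (8 : ℤ) ∣ gx := by
      rcases mul_eq_zero.mp hfac with hc | hc
      · exact ⟨y, by linarith⟩
      · exact ⟨-y, by linarith⟩
    rcases Int.even_or_odd c3 with ⟨d, hd⟩ | hodd
    · -- c3 even
      have hc3e : c3 = 2 * d := by linarith
      have h2dvd : (2 : ℤ) ∣ (c2 - d ^ 2) := by
        obtain ⟨k, hk⟩ := hdvd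
        have hk2 : 8 * x ^ 2 + 8 * d * x + 4 * c2 - 4 * d ^ 2 = 8 * k := by
          rw [show (8:ℤ) * x ^ 2 + 8 * d * x + 4 * c2 - 4 * d ^ 2
            = 8 * x ^ 2 + 4 * (2 * d) * x + (4 * c2 - (2 * d) ^ 2) by ring, ← hc3e, ← hgxdef]
          exact hk
        exact ⟨k - x ^ 2 - d * x, by linarith⟩
      obtain ⟨e, he⟩ := h2dvd
      have hc2e : c2 = d ^ 2 + 2 * e := by linarith
      have hrx64 : (64 : ℤ) * ((c1 - 2 * d * e) * x + (c0 - e ^ 2)) = 0 := by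
        rw [hrxdef, hc3e, hc2e] at hr0
        linear_combination hr0
      have hrx : (c1 - 2 * d * e) * x + (c0 - e ^ 2) = 0 :=
        (mul_eq_zero.mp hrx64).resolve_left (by norm_num)
      rcases eq_or_ne (c1 - 2 * d * e) 0 with ht | ht
      · -- f is the square of X² + dX + e
        have hc1e : c1 = 2 * d * e := by linarith
        have hc0e : c0 = e ^ 2 := by
          have h2 := hrx
          rw [ht] at h2
          linarith
        refine hsq (X ^ 2 + C d * X + C e) (Polynomial.funext fun t => ?_)
        rw [hfx t, hc3e, hc2e, hc1e, hc0e]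
        simp only [eval_pow, eval_add, eval_mul, eval_C, eval_X]
        ring
      · -- bound |x| directly
        have ht1 : 1 ≤ |c1 - 2 * d * e| := Int.one_le_abs ht
        have hxe : x * (c1 - 2 * d * e) = e ^ 2 - c0 := by linear_combination hrx
        have hxT : |x| * |c1 - 2 * d * e| ≤ e ^ 2 + H := by
          rw [← abs_mul, hxe]
          calc |e ^ 2 - c0| ≤ |e ^ 2| + |c0| := abs_sub _ _
            _ ≤ e ^ 2 + H := by
                rw [abs_pow, sq_abs]
                exact add_le_add_right hb0 _
        have hdH : 2 * |d| ≤ H := by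
          have h2 : |2 * d| ≤ H := by rw [← hc3e]; exact hb3
          rwa [abs_mul, abs_two] at h2
        rcases eq_or_ne d 0 with hdz | hdz
        · -- d = 0
          have heH : 2 * |e| ≤ H := by
            have h2 : |2 * e| ≤ H := by
              rw [show (2:ℤ) * e = c2 by rw [hc2e, hdz]; ring]
              exact hb2
            rwa [abs_mul, abs_two] at h2
          have hxb : |x| ≤ e ^ 2 + H :=
            le_trans (le_mul_of_one_le_right hx0 ht1) hxT
          exact masser_case_d0 H |x| e hH1 hxb heH hx
        · -- |d| ≥ 1
          have hd1 : 1 ≤ |d| := Int.one_le_abs hdz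
          have hxT' : |x| * |c1 - 2 * d * e| ≤ |e| ^ 2 + H := by rwa [sq_abs]
          have hde : 2 * (|d| * |e|) ≤ H + |c1 - 2 * d * e| := by
            have h2 : |2 * d * e| ≤ |c1| + |c1 - 2 * d * e| := by
              have h3 := abs_sub c1 (c1 - 2 * d * e)
              simpa using h3
            rw [show (2:ℤ) * d * e = (2 * d) * e by ring, abs_mul, abs_mul, abs_two] at h2
            linarith [hb1]
          have hTub : |c1 - 2 * d * e| ≤ H + 2 * (|d| * |e|) := by
            have h2 : |c1 - 2 * d * e| ≤ |c1| + |2 * d * e| := abs_sub _ _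
            rw [show (2:ℤ) * d * e = (2 * d) * e by ring, abs_mul, abs_mul, abs_two] at h2
            linarith [hb1]
          have heH : 2 * |e| ≤ H + |d| ^ 2 := by
            have h2 : |2 * e| ≤ |c2| + |d ^ 2| := by
              rw [← he]
              exact abs_sub _ _
            rw [abs_mul, abs_two, abs_pow] at h2
            linarith [hb2]
          exact masser_case_d1 H |x| |c1 - 2 * d * e| |d| |e| hH1 ht1 hd1 (abs_nonneg e)
            hxT' hde hTub heH hdH hx
    · -- c3 odd : impossible since 2 ∣ gx
      have hev : Even gx := by
        obtain ⟨k, hk⟩ := hdvd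
        exact ⟨4 * k, by rw [hk]; ring⟩
      have hod : Odd gx := by
        rw [show gx = 4 * (2 * x ^ 2 + c3 * x + c2) - c3 ^ 2 by rw [hgxdef]; ring]
        exact Even.sub_odd ⟨2 * (2 * x ^ 2 + c3 * x + c2), by ring⟩ hodd.pow
      exact (Int.not_odd_iff_even.mpr hev) hod
  · -- rx ≠ 0 : sandwich between consecutive squares
    refine sandwich_aux (8 * y) gx rx heq hr0 ?_
    have hG := boundG H c2 c3 x gx hH1 hb2 hb3 hgxdef
    have hR := boundR H c1 c2 c3 c0 rx x hH1 hb1 hb2 hb3 hb0 hrxdef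
    have hmain := masser_main_ineq H |x| hH1 hx
    linarith
end
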